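/- arXiv:2301.12379 — 4 statements merged into one kernel-verified Lean document; each statement's English description precedes it below -/
import Mathlib

section
/- Let E be a complete real inner product space, f : E → ℝ differentiable and L-smooth, and w > 0, S > 0 real constants. Define h : E → ℝ by h(θ) = w·exp(−f(θ)) / (w·exp(−f(θ)) + S). Then for all θ_x, θ_y ∈ E, ‖∇h(θ_x) − ∇h(θ_y)‖ ≤ (L/4)·‖θ_x − θ_y‖ + (1/4)·‖∇f(θ_y)‖. -/
/-! Writing `h = φ ∘ f` with `φ t = w e^{-t} / (w e^{-t} + S)`, the chain rule gives
`∇h θ = c θ • ∇f θ` with `c θ = φ' (f θ) = -u S / (u + S)²`, `u = w e^{-f θ} > 0`, so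
`c θ ∈ [-1/4, 0]` by AM-GM. Splitting
`c x • ∇f x - c y • ∇f y = c x • (∇f x - ∇f y) + (c x - c y) • ∇f y`
and using `|c x| ≤ 1/4`, `|c x - c y| ≤ 1/4` together with `L`-smoothness gives the bound. -/

open Real

theorem HasDerivAt.comp_hasGradientAt {E : Type*} [NormedAddCommGroup E] [InnerProductSpace ℝ E]
    [CompleteSpace E] {φ : ℝ → ℝ} {φ' : ℝ} {f : E → ℝ} {g : E} {x : E}
    (hφ : HasDerivAt φ φ' (f x)) (hf : HasGradientAt f g x) :
    HasGradientAt (φ ∘ f) (φ' • g) x := by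
  rw [hasGradientAt_iff_hasFDerivAt, map_smul]
  exact hφ.comp_hasFDerivAt x hf.hasFDerivAt

theorem norm_smul_sub_smul_le {F : Type*} [SeminormedAddCommGroup F] [NormedSpace ℝ F]
    (s t : ℝ) (u v : F) :
    ‖s • u - t • v‖ ≤ |s| * ‖u - v‖ + |s - t| * ‖v‖ := by
  have hsplit : s • u - t • v = s • (u - v) + (s - t) • v := by
    rw [smul_sub, sub_smul]; abel
  calc ‖s • u - t • v‖ ≤ ‖s • (u - v)‖ + ‖(s - t) • v‖ := hsplit ▸ norm_add_le _ _
    _ = |s| * ‖u - v‖ + |s - t| * ‖v‖ := by rw [norm_smul, norm_smul, norm_eq_abs, norm_eq_abs]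

theorem mul_div_add_sq_le_quarter (u S : ℝ) : u * S / (u + S) ^ 2 ≤ 1 / 4 := by
  rcases (sq_nonneg (u + S)).eq_or_lt with h0 | hpos
  · rw [← h0, div_zero]; norm_num
  · rw [div_le_iff₀ hpos]
    nlinarith [sq_nonneg (u - S)]

theorem hasDerivAt_mul_exp_neg_div (w S t : ℝ) (hden : w * exp (-t) + S ≠ 0) :
    HasDerivAt (fun s => w * exp (-s) / (w * exp (-s) + S))
      (-(w * exp (-t) * S / (w * exp (-t) + S) ^ 2)) t := by
  have hnum : HasDerivAt (fun s => w * exp (-s)) (w * -exp (-t)) t :=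
    ((hasDerivAt_neg t).exp).const_mul w |>.congr_deriv (by ring)
  exact (hnum.div (hnum.add_const S) hden).congr_deriv (by ring)

theorem stmt_3 {E : Type*} [NormedAddCommGroup E] [InnerProductSpace ℝ E] [CompleteSpace E]
    (f : E → ℝ) (hf : Differentiable ℝ f) (L : ℝ)
    (hsmooth : ∀ a b : E, ‖gradient f a - gradient f b‖ ≤ L * ‖a - b‖)
    (w S : ℝ) (hw : 0 < w) (hS : 0 < S)
    (h : E → ℝ)
    (hh : ∀ θ, h θ = w * Real.exp (-(f θ)) / (w * Real.exp (-(f θ)) + S)) :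
    ∀ θx θy : E,
      ‖gradient h θx - gradient h θy‖ ≤
        (L / 4) * ‖θx - θy‖ + (1 / 4) * ‖gradient f θy‖ := by
  set r : E → ℝ := fun θ => w * exp (-(f θ)) * S / (w * exp (-(f θ)) + S) ^ 2
  have hr_nonneg (θ : E) : 0 ≤ r θ := by positivity
  have hgrad (θ : E) : gradient h θ = -r θ • gradient f θ := by
    have hden : w * exp (-(f θ)) + S ≠ 0 := by positivity
    rw [funext hh]
    exact ((hasDerivAt_mul_exp_neg_div w S (f θ) hden).comp_hasGradientAt
      (hf θ).hasGradientAt).gradient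
  intro θx θy
  have hrx := mul_div_add_sq_le_quarter (w * exp (-(f θx))) S
  have hry := mul_div_add_sq_le_quarter (w * exp (-(f θy))) S
  have habs_x : |-r θx| ≤ 1 / 4 := by rw [abs_neg, abs_of_nonneg (hr_nonneg θx)]; exact hrx
  have habs_sub : |-r θx - -r θy| ≤ 1 / 4 := by
    rw [abs_le]; constructor <;> linarith [hr_nonneg θx, hr_nonneg θy]
  rw [hgrad θx, hgrad θy]
  calc _ ≤ |-r θx| * ‖gradient f θx - gradient f θy‖ + |-r θx - -r θy| * ‖gradient f θy‖ :=
        norm_smul_sub_smul_le _ _ _ _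
    _ ≤ 1 / 4 * (L * ‖θx - θy‖) + 1 / 4 * ‖gradient f θy‖ := by
        gcongr
        exact hsmooth θx θy
    _ = _ := by ring
end

section
/- Let E be a complete real inner product space, f : E → ℝ differentiable and L-smooth, and w > 0, S > 0 real constants. Define h : E → ℝ by h(θ) = w·exp(−f(θ)) / (w·exp(−f(θ)) + S). Then for all θ_x, θ_y ∈ E, |h(θ_x) − h(θ_y)| ≤ (L/8)·‖θ_x − θ_y‖² + (3/8)·‖∇f(θ_y)‖·‖θ_x − θ_y‖. -/
/-!
The weight is a logistic function of `-f`: `h θ = σ(log (w / S) - f θ)` with `σ` the sigmoid.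
Since `σ' = σ (1 - σ) ≤ 1/4`, `|h θx - h θy| ≤ |f θx - f θy| / 4`, and the descent lemma for
`L`-smooth `f` bounds `|f θx - f θy|` by `L/2 ‖θx - θy‖² + ‖∇f θy‖ ‖θx - θy‖`.
-/

open Real InnerProductSpace Set

namespace Real

lemma sigmoid_mul_one_sub_sigmoid_le (x : ℝ) : sigmoid x * (1 - sigmoid x) ≤ 4⁻¹ := by
  nlinarith [sq_nonneg (sigmoid x - 2⁻¹)]

lemma lipschitzWith_sigmoid : LipschitzWith 4⁻¹ sigmoid := by
  refine lipschitzWith_of_nnnorm_deriv_le differentiable_sigmoid fun x => ?_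
  rw [← NNReal.coe_le_coe, coe_nnnorm, deriv_sigmoid, norm_of_nonneg
    (mul_nonneg (sigmoid_nonneg x) (sub_nonneg.2 (sigmoid_le_one x)))]
  simpa using sigmoid_mul_one_sub_sigmoid_le x

lemma abs_sigmoid_sub_sigmoid_le (a b : ℝ) : |sigmoid a - sigmoid b| ≤ |a - b| / 4 := by
  simpa [dist_eq, div_eq_inv_mul] using lipschitzWith_sigmoid.dist_le_mul a b

end Real

lemma mul_exp_neg_div_mul_exp_neg_add_eq_sigmoid {w S : ℝ} (hw : 0 < w) (hS : 0 < S) (t : ℝ) :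
    w * exp (-t) / (w * exp (-t) + S) = sigmoid (log (w / S) - t) := by
  rw [sigmoid_def, neg_sub, exp_sub, exp_log (div_pos hw hS), exp_neg]
  field_simp

theorem norm_sub_sub_fderiv_apply_le {E F : Type*} [NormedAddCommGroup E] [NormedSpace ℝ E]
    [NormedAddCommGroup F] [NormedSpace ℝ F] {f : E → F} {L : ℝ} (hf : Differentiable ℝ f)
    (hL : ∀ a b, ‖fderiv ℝ f a - fderiv ℝ f b‖ ≤ L * ‖a - b‖) (x y : E) :
    ‖f x - f y - fderiv ℝ f y (x - y)‖ ≤ L / 2 * ‖x - y‖ ^ 2 := by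
  set d := x - y
  -- `‖g' t‖ ≤ L ‖d‖² t`, so `g` stays below the barrier `L ‖d‖² t² / 2` on `[0, 1]`.
  set g : ℝ → F := fun t => f (y + t • d) - f y - t • fderiv ℝ f y d
  have hg : ∀ t, HasDerivAt g (fderiv ℝ f (y + t • d) d - fderiv ℝ f y d) t := by
    intro t
    have hline : HasDerivAt (fun s : ℝ => y + s • d) d t := by
      simpa using ((hasDerivAt_id t).smul_const d).const_add y
    have := (((hf _).hasFDerivAt.comp_hasDerivAt t hline).sub_const (f y)).sub
      ((hasDerivAt_id t).smul_const (fderiv ℝ f y d))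
    simpa [Pi.sub_def] using this
  have hbound : ∀ t ∈ Ico (0 : ℝ) 1,
      ‖fderiv ℝ f (y + t • d) d - fderiv ℝ f y d‖ ≤ L * ‖d‖ ^ 2 * t := by
    rintro t ⟨ht, -⟩
    calc ‖fderiv ℝ f (y + t • d) d - fderiv ℝ f y d‖
        = ‖(fderiv ℝ f (y + t • d) - fderiv ℝ f y) d‖ := rfl
      _ ≤ ‖fderiv ℝ f (y + t • d) - fderiv ℝ f y‖ * ‖d‖ := ContinuousLinearMap.le_opNorm _ _
      _ ≤ L * ‖t • d‖ * ‖d‖ := by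
          gcongr
          simpa using hL (y + t • d) y
      _ = L * ‖d‖ ^ 2 * t := by rw [norm_smul, norm_of_nonneg ht]; ring
  have hB : ∀ t : ℝ, HasDerivAt (fun t => L * ‖d‖ ^ 2 / 2 * t ^ 2) (L * ‖d‖ ^ 2 * t) t := by
    intro t
    exact ((hasDerivAt_pow 2 t).const_mul (L * ‖d‖ ^ 2 / 2)).congr_deriv (by ring)
  have := image_norm_le_of_norm_deriv_right_le_deriv_boundary
    (fun t _ => (hg t).continuousAt.continuousWithinAt) (fun t _ => (hg t).hasDerivWithinAt)
    (by simp [g]) hB hbound (right_mem_Icc.2 zero_le_one)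
  calc ‖f x - f y - fderiv ℝ f y d‖ = ‖g 1‖ := by simp [g, d]
    _ ≤ L * ‖d‖ ^ 2 / 2 * 1 ^ 2 := this
    _ = L / 2 * ‖d‖ ^ 2 := by ring

theorem abs_sub_sub_inner_gradient_le {E : Type*} [NormedAddCommGroup E] [InnerProductSpace ℝ E]
    [CompleteSpace E] {f : E → ℝ} {L : ℝ} (hf : Differentiable ℝ f)
    (hL : ∀ a b, ‖gradient f a - gradient f b‖ ≤ L * ‖a - b‖) (x y : E) :
    |f x - f y - ⟪gradient f y, x - y⟫_ℝ| ≤ L / 2 * ‖x - y‖ ^ 2 := by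
  have hL' : ∀ a b, ‖fderiv ℝ f a - fderiv ℝ f b‖ ≤ L * ‖a - b‖ := fun a b => by
    rw [← toDual_gradient, ← toDual_gradient, ← map_sub, LinearIsometryEquiv.norm_map]
    exact hL a b
  rw [inner_gradient_left, ← norm_eq_abs]
  exact norm_sub_sub_fderiv_apply_le hf hL' x y

theorem stmt_5 {E : Type*} [NormedAddCommGroup E] [InnerProductSpace ℝ E] [CompleteSpace E]
    (f : E → ℝ) (hf : Differentiable ℝ f) (L : ℝ)
    (hsmooth : ∀ a b : E, ‖gradient f a - gradient f b‖ ≤ L * ‖a - b‖)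
    (w S : ℝ) (hw : 0 < w) (hS : 0 < S)
    (h : E → ℝ)
    (hh : ∀ θ, h θ = w * Real.exp (-(f θ)) / (w * Real.exp (-(f θ)) + S)) :
    ∀ θx θy : E,
      |h θx - h θy| ≤
        (L / 8) * ‖θx - θy‖ ^ 2 + (3 / 8) * ‖gradient f θy‖ * ‖θx - θy‖ := by
  intro x y
  have hdescent := abs_sub_sub_inner_gradient_le hf hsmooth x y
  have hinner := abs_real_inner_le_norm (gradient f y) (x - y)
  have hf_sub : |f x - f y| ≤ L / 2 * ‖x - y‖ ^ 2 + ‖gradient f y‖ * ‖x - y‖ := by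
    linarith [abs_sub_abs_le_abs_sub (f x - f y) ⟪gradient f y, x - y⟫_ℝ]
  have hprod_nonneg : 0 ≤ ‖gradient f y‖ * ‖x - y‖ := by positivity
  rw [hh, hh, mul_exp_neg_div_mul_exp_neg_add_eq_sigmoid hw hS,
    mul_exp_neg_div_mul_exp_neg_add_eq_sigmoid hw hS]
  calc |sigmoid (log (w / S) - f x) - sigmoid (log (w / S) - f y)|
      ≤ |log (w / S) - f x - (log (w / S) - f y)| / 4 := abs_sigmoid_sub_sigmoid_le _ _
    _ = |f x - f y| / 4 := by rw [sub_sub_sub_cancel_left, abs_sub_comm]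
    _ ≤ L / 8 * ‖x - y‖ ^ 2 + 3 / 8 * ‖gradient f y‖ * ‖x - y‖ := by linarith
end

section
/- Let E be a complete real inner product space, N ≥ 1, and for j = 1,…,N let f_j : E → ℝ be differentiable and L-smooth, and let w_j > 0, S_j > 0 be real constants. Define g : E → ℝ by g(θ) = (1/N)·Σ_{j=1}^N ln(w_j·exp(−f_j(θ)) + S_j). Then for all θ_1, θ_2 ∈ E, g(θ_1) ≤ g(θ_2) + ⟨∇g(θ_2), θ_1 − θ_2⟩ + (L/2 + (3/(16N))·Σ_{j=1}^N ‖∇f_j(θ_2)‖²)·‖θ_1 − θ_2‖² + ((L/(16N))·Σ_{j=1}^N ‖∇f_j(θ_2)‖)·‖θ_1 − θ_2‖³. -/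
/-!
Each summand of `g` is `φ ∘ f_j` with `φ x = log (w * exp (-x) + S)`, whose derivative
`-sigmoid (log (w / S) - x)` is bounded by `1` and `1/4`-Lipschitz. Along the segment
`t ↦ θ₂ + t • (θ₁ - θ₂)`, L-smoothness controls both the drift of `∇f_j` and, through the
descent lemma, that of `f_j`; hence the derivative of `φ ∘ f_j` moves away from its value at
`t = 0` by at most `(L + ‖∇f_j θ₂‖² / 4) t ‖δ‖² + (L ‖∇f_j θ₂‖ / 8) t² ‖δ‖³`. Integrating over
`[0, 1]` bounds each summand with constants `1/8` and `1/24`, and averaging over `j` gives the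
claim.
-/

open Finset Real

theorem le_cubic_of_hasDerivAt_le_quadratic {u u' : ℝ → ℝ} {a b c : ℝ}
    (hu : ∀ t, HasDerivAt u (u' t) t) (h : ∀ t, 0 ≤ t → u' t ≤ a + b * t + c * t ^ 2)
    {t : ℝ} (ht : 0 ≤ t) :
    u t ≤ u 0 + a * t + b * t ^ 2 / 2 + c * t ^ 3 / 3 := by
  set B : ℝ → ℝ := fun s => u 0 + a * s + b * s ^ 2 / 2 + c * s ^ 3 / 3
  have hB : ∀ s, HasDerivAt B (a + b * s + c * s ^ 2) s := fun s => by
    refine (((((hasDerivAt_id s).const_mul a).const_add (u 0)).add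
      (((hasDerivAt_pow 2 s).const_mul b).div_const 2)).add
      (((hasDerivAt_pow 3 s).const_mul c).div_const 3)).congr_deriv ?_
    norm_num
    ring
  exact image_le_of_deriv_right_le_deriv_boundary (f := u) (B := B)
    (fun s _ => (hu s).continuousAt.continuousWithinAt) (fun s _ => (hu s).hasDerivWithinAt)
    (by simp [B]) (fun s _ => (hB s).continuousAt.continuousWithinAt)
    (fun s _ => (hB s).hasDerivWithinAt) (fun s hs => h s hs.1) ⟨ht, le_rfl⟩

theorem abs_sub_sub_mul_le_of_hasDerivAt {u u' : ℝ → ℝ} {ℓ : ℝ}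
    (hu : ∀ t, HasDerivAt u (u' t) t) (h : ∀ t, 0 ≤ t → |u' t - u' 0| ≤ ℓ * t)
    {t : ℝ} (ht : 0 ≤ t) :
    |u t - u 0 - u' 0 * t| ≤ ℓ * t ^ 2 / 2 := by
  have upper := le_cubic_of_hasDerivAt_le_quadratic (a := u' 0) (b := ℓ) (c := 0) hu
    (fun s hs => by linarith [(abs_le.1 (h s hs)).2]) ht
  have lower := le_cubic_of_hasDerivAt_le_quadratic (u := fun s => -u s) (a := -u' 0) (c := 0)
    (fun s => (hu s).neg) (fun s hs => by linarith [(abs_le.1 (h s hs)).1]) ht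
  rw [abs_le]
  constructor <;> linarith

theorem comp_le_of_hasDerivAt_of_lipschitzWith {φ φ' u u' : ℝ → ℝ} {M ℓ : ℝ} {K : NNReal}
    (hφ : ∀ x, HasDerivAt φ (φ' x) x) (hφ'_le : ∀ x, |φ' x| ≤ M) (hφ'_lip : LipschitzWith K φ')
    (hu : ∀ t, HasDerivAt u (u' t) t) (hu' : ∀ t, 0 ≤ t → |u' t - u' 0| ≤ ℓ * t) :
    φ (u 1) ≤ φ (u 0) + φ' (u 0) * u' 0 + (M * ℓ + K * u' 0 ^ 2) / 2 + K * ℓ * |u' 0| / 6 := by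
  have hu_sub : ∀ t, 0 ≤ t → |u t - u 0| ≤ |u' 0| * t + ℓ * t ^ 2 / 2 := fun t ht => by
    have := abs_sub_sub_mul_le_of_hasDerivAt hu hu' ht
    have := abs_sub_abs_le_abs_sub (u t - u 0) (u' 0 * t)
    rw [abs_mul, abs_of_nonneg ht] at this
    linarith
  have key := le_cubic_of_hasDerivAt_le_quadratic (t := 1) (u := φ ∘ u)
    (u' := fun t => φ' (u t) * u' t) (a := φ' (u 0) * u' 0) (b := M * ℓ + K * u' 0 ^ 2)
    (c := K * ℓ * |u' 0| / 2) (fun t => (hφ (u t)).comp t (hu t)) (fun t ht => by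
      have h_u'_drift : |φ' (u t) * (u' t - u' 0)| ≤ M * (ℓ * t) := by
        rw [abs_mul]
        exact mul_le_mul (hφ'_le _) (hu' t ht) (abs_nonneg _) ((abs_nonneg _).trans (hφ'_le 0))
      have h_φ'_drift : |(φ' (u t) - φ' (u 0)) * u' 0| ≤ K * (|u' 0| * t + ℓ * t ^ 2 / 2) * |u' 0| := by
        rw [abs_mul]
        gcongr
        exact (hφ'_lip.dist_le_mul _ _).trans (by gcongr; exact hu_sub t ht)
      have split : φ' (u t) * u' t = φ' (u 0) * u' 0 + φ' (u t) * (u' t - u' 0) +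
          (φ' (u t) - φ' (u 0)) * u' 0 := by ring
      have expand : K * (|u' 0| * t + ℓ * t ^ 2 / 2) * |u' 0| =
          K * u' 0 ^ 2 * t + K * ℓ * |u' 0| / 2 * t ^ 2 := by rw [← sq_abs (u' 0)]; ring
      rw [split]
      linarith [le_abs_self (φ' (u t) * (u' t - u' 0)), le_abs_self ((φ' (u t) - φ' (u 0)) * u' 0)])
    zero_le_one
  simp only [Function.comp_apply] at key
  linarith

theorem lipschitzWith_sigmoid : LipschitzWith (1 / 4) sigmoid := by
  refine lipschitzWith_of_nnnorm_deriv_le differentiable_sigmoid fun x => ?_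
  rw [← NNReal.coe_le_coe, coe_nnnorm, deriv_sigmoid, Real.norm_eq_abs,
    abs_of_nonneg (mul_nonneg (sigmoid_nonneg x) (by linarith [sigmoid_le_one x]))]
  push_cast
  nlinarith [sq_nonneg (sigmoid x - 1 / 2)]

theorem hasDerivAt_log_mul_exp_neg_add {w S : ℝ} (hw : 0 < w) (hS : 0 < S) (x : ℝ) :
    HasDerivAt (fun x => log (w * exp (-x) + S)) (-sigmoid (log (w / S) - x)) x := by
  have hpos : 0 < w * exp (-x) + S := by positivity
  refine ((((hasDerivAt_neg x).exp).const_mul w).add_const S |>.log hpos.ne').congr_deriv ?_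
  rw [sigmoid_def, neg_sub, exp_sub, exp_log (div_pos hw hS), exp_neg]
  field_simp

theorem lipschitzWith_neg_sigmoid_const_sub (c : ℝ) :
    LipschitzWith (1 / 4) fun x => -sigmoid (c - x) :=
  LipschitzWith.of_dist_le_mul fun x y => by
    rw [dist_neg_neg, ← dist_sub_left c x y]
    exact lipschitzWith_sigmoid.dist_le_mul _ _

section
variable {E : Type*} [NormedAddCommGroup E] [InnerProductSpace ℝ E] [CompleteSpace E]

theorem hasDerivAt_comp_add_smul {f : E → ℝ} (hf : Differentiable ℝ f) (x v : E) (t : ℝ) :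
    HasDerivAt (fun t : ℝ => f (x + t • v)) (inner ℝ (gradient f (x + t • v)) v) t := by
  have hline : HasDerivAt (fun t : ℝ => x + t • v) v t := by
    simpa using ((hasDerivAt_id t).smul_const v).const_add x
  have := (hasGradientAt_iff_hasFDerivAt.1 (hf (x + t • v)).hasGradientAt).comp_hasDerivAt t hline
  rwa [InnerProductSpace.toDual_apply_apply] at this

theorem comp_le_of_lipschitz_gradient {φ φ' : ℝ → ℝ} {M L : ℝ} {K : NNReal}
    (hφ : ∀ x, HasDerivAt φ (φ' x) x) (hφ'_le : ∀ x, |φ' x| ≤ M) (hφ'_lip : LipschitzWith K φ')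
    {f : E → ℝ} (hf : Differentiable ℝ f) {x : E}
    (hsmooth : ∀ a, ‖gradient f a - gradient f x‖ ≤ L * ‖a - x‖) (y : E) :
    φ (f y) ≤ φ (f x) + φ' (f x) * inner ℝ (gradient f x) (y - x) +
      (M * L + K * ‖gradient f x‖ ^ 2) / 2 * ‖y - x‖ ^ 2 +
      K * L * ‖gradient f x‖ / 6 * ‖y - x‖ ^ 3 := by
  set v := y - x
  have hu := hasDerivAt_comp_add_smul hf x v
  have hu' : ∀ t : ℝ, 0 ≤ t →
      |inner ℝ (gradient f (x + t • v)) v - inner ℝ (gradient f (x + (0 : ℝ) • v)) v| ≤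
        L * ‖v‖ ^ 2 * t := fun t ht => by
    rw [zero_smul, add_zero, ← inner_sub_left]
    refine (abs_real_inner_le_norm _ _).trans ?_
    calc ‖gradient f (x + t • v) - gradient f x‖ * ‖v‖ ≤ L * ‖t • v‖ * ‖v‖ := by
          gcongr
          simpa using hsmooth (x + t • v)
      _ = L * ‖v‖ ^ 2 * t := by rw [norm_smul, Real.norm_of_nonneg ht]; ring
  have key := comp_le_of_hasDerivAt_of_lipschitzWith hφ hφ'_le hφ'_lip hu hu'
  simp only [zero_smul, add_zero, one_smul, v, add_sub_cancel] at key
  have h_inner : |inner ℝ (gradient f x) v| ≤ ‖gradient f x‖ * ‖v‖ := abs_real_inner_le_norm _ _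
  have hLv : 0 ≤ L * ‖v‖ ^ 2 := by
    rw [sq, ← mul_assoc]
    exact mul_nonneg ((norm_nonneg _).trans (hsmooth y)) (norm_nonneg _)
  have h_sq : (K : ℝ) * inner ℝ (gradient f x) v ^ 2 ≤ K * (‖gradient f x‖ ^ 2 * ‖v‖ ^ 2) := by
    rw [← sq_abs, ← mul_pow]
    gcongr
  have h_cube : K * (L * ‖v‖ ^ 2) * |inner ℝ (gradient f x) v| ≤
      K * (L * ‖v‖ ^ 2) * (‖gradient f x‖ * ‖v‖) :=
    mul_le_mul_of_nonneg_left h_inner (mul_nonneg K.2 hLv)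
  linear_combination key + h_sq / 2 + h_cube / 6

theorem inner_gradient_const_mul_sum_comp {ι : Type*} (s : Finset ι) (c : ℝ) {φ : ι → ℝ → ℝ}
    {φ' : ι → ℝ} {f : ι → E → ℝ} {x : E} (hφ : ∀ i ∈ s, HasDerivAt (φ i) (φ' i) (f i x))
    (hf : ∀ i ∈ s, DifferentiableAt ℝ (f i) x) (v : E) :
    inner ℝ (gradient (fun θ => c * ∑ i ∈ s, φ i (f i θ)) x) v =
      c * ∑ i ∈ s, φ' i * inner ℝ (gradient (f i) x) v := by
  have hD : HasFDerivAt (fun θ => c * ∑ i ∈ s, φ i (f i θ))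
      (c • ∑ i ∈ s, φ' i • fderiv ℝ (f i) x) x :=
    (HasFDerivAt.fun_sum fun i hi => (hφ i hi).comp_hasFDerivAt x (hf i hi).hasFDerivAt).const_mul c
  simp [inner_gradient_left, hD.fderiv]

theorem log_mul_exp_neg_add_comp_le {w S : ℝ} (hw : 0 < w) (hS : 0 < S) {f : E → ℝ}
    (hf : Differentiable ℝ f) {x : E} {L : ℝ}
    (hsmooth : ∀ a, ‖gradient f a - gradient f x‖ ≤ L * ‖a - x‖) (y : E) :
    log (w * exp (-f y) + S) ≤ log (w * exp (-f x) + S) -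
      sigmoid (log (w / S) - f x) * inner ℝ (gradient f x) (y - x) +
      (L + ‖gradient f x‖ ^ 2 / 4) / 2 * ‖y - x‖ ^ 2 + L * ‖gradient f x‖ / 24 * ‖y - x‖ ^ 3 := by
  have key := comp_le_of_lipschitz_gradient (φ := fun x => log (w * exp (-x) + S)) (M := 1)
    (hasDerivAt_log_mul_exp_neg_add hw hS)
    (fun x => by rw [abs_neg, abs_of_nonneg (sigmoid_nonneg _)]; exact sigmoid_le_one _)
    (lipschitzWith_neg_sigmoid_const_sub (log (w / S))) hf hsmooth y
  push_cast at key
  linear_combination key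
end

theorem stmt_7 {E : Type*} [NormedAddCommGroup E] [InnerProductSpace ℝ E] [CompleteSpace E]
    (N : ℕ) (hN : 1 ≤ N)
    (f : Fin N → E → ℝ) (hf : ∀ j, Differentiable ℝ (f j)) (L : ℝ)
    (hsmooth : ∀ (j : Fin N) (a b : E),
      ‖gradient (f j) a - gradient (f j) b‖ ≤ L * ‖a - b‖)
    (w S : Fin N → ℝ) (hw : ∀ j, 0 < w j) (hS : ∀ j, 0 < S j)
    (g : E → ℝ)
    (hg : ∀ θ, g θ = (1 / (N : ℝ)) * ∑ j, Real.log (w j * Real.exp (-(f j θ)) + S j)) :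
    ∀ θ1 θ2 : E,
      g θ1 ≤ g θ2 + (inner ℝ (gradient g θ2) (θ1 - θ2) : ℝ) +
        (L / 2 + (3 / (16 * (N : ℝ))) * ∑ j, ‖gradient (f j) θ2‖ ^ 2) * ‖θ1 - θ2‖ ^ 2 +
        ((L / (16 * (N : ℝ))) * ∑ j, ‖gradient (f j) θ2‖) * ‖θ1 - θ2‖ ^ 3 := by
  obtain rfl : g = fun θ => (1 / (N : ℝ)) * ∑ j, log (w j * exp (-f j θ) + S j) := funext hg
  intro θ1 θ2
  rw [inner_gradient_const_mul_sum_comp _ _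
    (fun j _ => hasDerivAt_log_mul_exp_neg_add (hw j) (hS j) (f j θ2)) (fun j _ => (hf j) θ2)]
  have hterm j : log (w j * exp (-f j θ1) + S j) ≤ log (w j * exp (-f j θ2) + S j) +
      -sigmoid (log (w j / S j) - f j θ2) * inner ℝ (gradient (f j) θ2) (θ1 - θ2) +
      (L / 2 + 3 / 16 * ‖gradient (f j) θ2‖ ^ 2) * ‖θ1 - θ2‖ ^ 2 +
      L / 16 * ‖gradient (f j) θ2‖ * ‖θ1 - θ2‖ ^ 3 := by
    have hLδ : 0 ≤ L * ‖θ1 - θ2‖ := (norm_nonneg _).trans (hsmooth j θ1 θ2)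
    have hG : 0 ≤ ‖gradient (f j) θ2‖ ^ 2 * ‖θ1 - θ2‖ ^ 2 := by positivity
    have hLG := mul_nonneg (mul_nonneg hLδ (norm_nonneg (gradient (f j) θ2))) (sq_nonneg ‖θ1 - θ2‖)
    linear_combination log_mul_exp_neg_add_comp_le (hw j) (hS j) (hf j) (hsmooth j · θ2) θ1 +
      hG / 16 + hLG / 48
  have hN0 : (N : ℝ) ≠ 0 := Nat.cast_ne_zero.2 (Nat.one_le_iff_ne_zero.1 hN)
  calc 1 / (N : ℝ) * ∑ j, log (w j * exp (-f j θ1) + S j)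
      ≤ 1 / (N : ℝ) * ∑ j, (log (w j * exp (-f j θ2) + S j) +
        -sigmoid (log (w j / S j) - f j θ2) * inner ℝ (gradient (f j) θ2) (θ1 - θ2) +
        (L / 2 + 3 / 16 * ‖gradient (f j) θ2‖ ^ 2) * ‖θ1 - θ2‖ ^ 2 +
        L / 16 * ‖gradient (f j) θ2‖ * ‖θ1 - θ2‖ ^ 3) := by
        gcongr with j
        exact hterm j
    _ = _ := by
        simp only [sum_add_distrib, ← sum_mul, ← mul_sum, sum_const, card_univ, Fintype.card_fin,
          nsmul_eq_mul]
        field_simp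
end

section
/- Let E be a complete real inner product space, N, K ≥ 1, and for j = 1,…,N let f_j : E → ℝ be differentiable and L-smooth, with the uniform gradient bound (1/N)·Σ_{j=1}^N ‖∇f_j(θ)‖² ≤ σ² for all θ ∈ E. Let w_{j,k} > 0 be positive constants and define L(θ_1,…,θ_K) = (1/N)·Σ_{j=1}^N ln(Σ_{k=1}^K w_{j,k}·exp(−f_j(θ_k))), with ∇_k L(Θ) the gradient at θ_k of the map θ ↦ L(θ_1,…,θ_{k−1}, θ, θ_{k+1},…,θ_K). Let η > 0, let Θ = (θ_1,…,θ_K), and define Θ' by θ'_k = θ_k + η·∇_k L(Θ) for each k. Then L(Θ') − L(Θ) ≥ Σ_{k=1}^K ( η − (5L/2)·η² − (9σ²/16)·η² − (3Lσ²/16)·η³ )·‖∇_k L(Θ)‖². -/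
/-!
Each summand `log ∑ₖ w_{j,k} exp (-f_j θ_k)` is a convex function of the losses `f_j θ_k`
(log-sum-exp), with gradient minus the responsibilities `P_{j,k}`. Its supporting hyperplane
bounds the change of the objective from below by the `P`-weighted mean of the loss decreases
`f_j θ_k - f_j θ'_k`, and the descent lemma for the `L`-smooth `f_j` bounds each of those by
`-⟪∇f_j θ_k, θ'_k - θ_k⟫ - L/2 ‖θ'_k - θ_k‖²`. Since `∇_k 𝓛(Θ) = -(1/N) ∑_j P_{j,k} ∇f_j θ_k`,
this gives `𝓛(Θ') ≥ 𝓛(Θ) + ∑_k ⟪∇_k 𝓛(Θ), θ'_k - θ_k⟫ - L/2 ∑_k ‖θ'_k - θ_k‖²`, i.e. the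
ascent step gains at least `∑_k (η - L η²/2) ‖∇_k 𝓛(Θ)‖²`. This dominates the claimed bound
because `L ≥ 0`, which smoothness forces as soon as some `∇_k 𝓛(Θ)` is nonzero.
-/

open Finset RealInnerProductSpace

theorem nonneg_of_norm_sub_le_mul_norm {E F : Type*} [NormedAddCommGroup E] [Nontrivial E]
    [SeminormedAddCommGroup F] {u : E → F} {L : ℝ} (h : ∀ a b, ‖u a - u b‖ ≤ L * ‖a - b‖) :
    0 ≤ L := by
  obtain ⟨v, hv⟩ := exists_ne (0 : E)
  have := h v 0
  rw [sub_zero] at this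
  exact nonneg_of_mul_nonneg_left ((norm_nonneg _).trans this) (norm_pos_iff.2 hv)

section Smooth

variable {E : Type*} [NormedAddCommGroup E] [InnerProductSpace ℝ E] [CompleteSpace E]

theorem le_add_inner_gradient_add_sq {f : E → ℝ} (hf : Differentiable ℝ f) {L : ℝ}
    (hL : ∀ a b, ‖gradient f a - gradient f b‖ ≤ L * ‖a - b‖) (x v : E) :
    f (x + v) ≤ f x + ⟪gradient f x, v⟫ + L / 2 * ‖v‖ ^ 2 := by
  have hφ : ∀ t : ℝ, HasDerivAt (fun t => f (x + t • v)) ⟪gradient f (x + t • v), v⟫ t := by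
    intro t
    have hline : HasDerivAt (fun t : ℝ => x + t • v) v t := by
      simpa using ((hasDerivAt_id t).smul_const v).const_add x
    have := (hf (x + t • v)).hasFDerivAt.comp_hasDerivAt t hline
    rwa [((hf _).hasGradientAt).fderiv_apply] at this
  have hB : ∀ t : ℝ, HasDerivAt (fun t => f x + ⟪gradient f x, v⟫ * t + L / 2 * ‖v‖ ^ 2 * t ^ 2)
      (⟪gradient f x, v⟫ + L * ‖v‖ ^ 2 * t) t := by
    intro t
    refine ((((hasDerivAt_id' t).const_mul _).const_add (f x)).fun_add
      ((hasDerivAt_pow 2 t).const_mul (L / 2 * ‖v‖ ^ 2))).congr_deriv ?_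
    push_cast; ring
  have hslope : ∀ t ∈ Set.Ico (0 : ℝ) 1,
      ⟪gradient f (x + t • v), v⟫ ≤ ⟪gradient f x, v⟫ + L * ‖v‖ ^ 2 * t := by
    rintro t ⟨ht, -⟩
    have hdiff : ⟪gradient f (x + t • v) - gradient f x, v⟫ ≤ L * ‖v‖ ^ 2 * t :=
      calc _ ≤ ‖gradient f (x + t • v) - gradient f x‖ * ‖v‖ := real_inner_le_norm _ _
        _ ≤ L * ‖(x + t • v) - x‖ * ‖v‖ := by gcongr; exact hL _ _
        _ = L * ‖v‖ ^ 2 * t := by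
          rw [add_sub_cancel_left, norm_smul, Real.norm_of_nonneg ht]; ring
    rw [inner_sub_left] at hdiff
    linarith
  have := image_le_of_deriv_right_le_deriv_boundary (a := 0) (b := 1)
    (fun t _ => (hφ t).continuousAt.continuousWithinAt) (fun t _ => (hφ t).hasDerivWithinAt)
    (by simp) (fun t _ => (hB t).continuousAt.continuousWithinAt)
    (fun t _ => (hB t).hasDerivWithinAt) hslope (Set.right_mem_Icc.2 zero_le_one)
  simpa using this

end Smooth

section Mixture

variable {ι : Type*} [Fintype ι] {w : ι → ℝ}

noncomputable def logMix (w y : ι → ℝ) : ℝ :=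
  Real.log (∑ k, w k * Real.exp (-y k))

noncomputable def responsibility (w y : ι → ℝ) (k : ι) : ℝ :=
  w k * Real.exp (-y k) / ∑ m, w m * Real.exp (-y m)

theorem mul_exp_neg_le_sum (hw : ∀ k, 0 < w k) (y : ι → ℝ) (k : ι) :
    w k * Real.exp (-y k) ≤ ∑ m, w m * Real.exp (-y m) :=
  single_le_sum (f := fun m => w m * Real.exp (-y m))
    (fun m _ => (mul_pos (hw m) (Real.exp_pos _)).le) (mem_univ k)

theorem sum_mul_exp_neg_pos [Nonempty ι] (hw : ∀ k, 0 < w k) (y : ι → ℝ) :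
    0 < ∑ m, w m * Real.exp (-y m) :=
  sum_pos (fun m _ => mul_pos (hw m) (Real.exp_pos _)) univ_nonempty

theorem responsibility_nonneg (hw : ∀ k, 0 < w k) (y : ι → ℝ) (k : ι) :
    0 ≤ responsibility w y k :=
  div_nonneg (mul_pos (hw k) (Real.exp_pos _)).le
    ((mul_pos (hw k) (Real.exp_pos _)).le.trans (mul_exp_neg_le_sum hw y k))

theorem responsibility_le_one (hw : ∀ k, 0 < w k) (y : ι → ℝ) (k : ι) :
    responsibility w y k ≤ 1 :=
  div_le_one_of_le₀ (mul_exp_neg_le_sum hw y k)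
    ((mul_pos (hw k) (Real.exp_pos _)).le.trans (mul_exp_neg_le_sum hw y k))

theorem sum_responsibility [Nonempty ι] (hw : ∀ k, 0 < w k) (y : ι → ℝ) :
    ∑ k, responsibility w y k = 1 := by
  simp only [responsibility]
  rw [← sum_div, div_self (sum_mul_exp_neg_pos hw y).ne']

theorem sum_responsibility_mul_sub_le_logMix_sub [Nonempty ι] (hw : ∀ k, 0 < w k)
    (y y' : ι → ℝ) :
    ∑ k, responsibility w y k * (y k - y' k) ≤ logMix w y' - logMix w y := by
  have hjensen := convexOn_exp.map_sum_le (t := univ) (p := fun k => y k - y' k)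
    (fun k _ => responsibility_nonneg hw y k) (sum_responsibility hw y) (by simp)
  have hmean : ∑ k, responsibility w y k • Real.exp (y k - y' k)
      = (∑ k, w k * Real.exp (-y' k)) / ∑ m, w m * Real.exp (-y m) := by
    rw [sum_div]
    refine sum_congr rfl fun k _ => ?_
    rw [responsibility, smul_eq_mul, div_mul_eq_mul_div, mul_assoc, ← Real.exp_add]
    ring_nf
  have hS := sum_mul_exp_neg_pos hw y
  have hS' := sum_mul_exp_neg_pos hw y'
  rw [hmean, ← Real.le_log_iff_exp_le (div_pos hS' hS), Real.log_div hS'.ne' hS.ne'] at hjensen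
  simpa [logMix] using hjensen

variable {E : Type*} [NormedAddCommGroup E] [InnerProductSpace ℝ E] [CompleteSpace E]

theorem hasGradientAt_logMix_update [DecidableEq ι] (hw : ∀ k, 0 < w k) {f : E → ℝ}
    (Θ : ι → E) (k : ι) (hf : DifferentiableAt ℝ f (Θ k)) :
    HasGradientAt (fun θ => logMix w (fun m => f (Function.update Θ k θ m)))
      (-(responsibility w (fun m => f (Θ m)) k • gradient f (Θ k))) (Θ k) := by
  have : Nonempty ι := ⟨k⟩
  set C := ∑ m ∈ univ \ {k}, w m * Real.exp (-f (Θ m))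
  have hsplit : ∀ θ, ∑ m, w m * Real.exp (-f (Function.update Θ k θ m))
      = w k * Real.exp (-f θ) + C := by
    intro θ
    rw [← sum_update_of_mem (mem_univ k)]
    refine sum_congr rfl fun m _ => ?_
    rcases eq_or_ne m k with rfl | hm <;> simp [*]
  have hS : w k * Real.exp (-f (Θ k)) + C = ∑ m, w m * Real.exp (-f (Θ m)) := by
    simpa using (hsplit (Θ k)).symm
  have hmass := (((hasGradientAt_iff_hasFDerivAt.1 hf.hasGradientAt).fun_neg.exp).const_mul
    (w k)).add_const C
  have hlog := hmass.log (by rw [hS]; exact (sum_mul_exp_neg_pos hw _).ne')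
  simp only [logMix, hsplit]
  rw [hasGradientAt_iff_hasFDerivAt]
  refine hlog.congr_fderiv ?_
  ext v
  simp only [hS, toDual_gradient, smul_neg, neg_apply, smul_apply, smul_eq_mul, responsibility,
    map_neg, map_smul, neg_inj]
  ring

end Mixture

section Objective

variable {E : Type*} [NormedAddCommGroup E] [InnerProductSpace ℝ E] [CompleteSpace E]
  {ι : Type*} [Fintype ι] [DecidableEq ι] {N : ℕ} {f : Fin N → E → ℝ} {w : Fin N → ι → ℝ}

noncomputable def blockGradient (F : (ι → E) → ℝ) (Θ : ι → E) (k : ι) : E :=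
  gradient (fun θ => F (Function.update Θ k θ)) (Θ k)

noncomputable def clusterObjective (f : Fin N → E → ℝ) (w : Fin N → ι → ℝ) (Θ : ι → E) : ℝ :=
  (1 / (N : ℝ)) * ∑ j, logMix (w j) (fun k => f j (Θ k))

theorem hasGradientAt_clusterObjective_update (hw : ∀ j k, 0 < w j k) (Θ : ι → E) (k : ι)
    (hf : ∀ j, DifferentiableAt ℝ (f j) (Θ k)) :
    HasGradientAt (fun θ => clusterObjective f w (Function.update Θ k θ))
      (-((1 / (N : ℝ)) • ∑ j, responsibility (w j) (fun m => f j (Θ m)) k • gradient (f j) (Θ k)))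
      (Θ k) := by
  have := (HasFDerivAt.fun_sum (u := univ) fun j _ => hasGradientAt_iff_hasFDerivAt.1
    (hasGradientAt_logMix_update (hw j) Θ k (hf j))).const_mul (1 / (N : ℝ))
  rw [hasGradientAt_iff_hasFDerivAt, map_neg, map_smul, map_sum, ← smul_neg, ← sum_neg_distrib]
  simp only [map_neg] at this ⊢
  exact this

theorem clusterObjective_add_sum_inner_sub_le [Nonempty ι] (hw : ∀ j k, 0 < w j k)
    (hf : ∀ j, Differentiable ℝ (f j)) {L : ℝ} (hL : 0 ≤ L)
    (hsmooth : ∀ j a b, ‖gradient (f j) a - gradient (f j) b‖ ≤ L * ‖a - b‖) (Θ Θ' : ι → E) :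
    clusterObjective f w Θ
        + ∑ k, ⟪blockGradient (clusterObjective f w) Θ k, Θ' k - Θ k⟫
        - L / 2 * ∑ k, ‖Θ' k - Θ k‖ ^ 2
      ≤ clusterObjective f w Θ' := by
  set P := fun j => responsibility (w j) (fun m => f j (Θ m))
  have hP0 : ∀ j k, 0 ≤ P j k := fun j => responsibility_nonneg (hw j) _
  have hlin : ∑ k, ⟪blockGradient (clusterObjective f w) Θ k, Θ' k - Θ k⟫
      = -((1 / (N : ℝ)) * ∑ j, ∑ k, P j k * ⟪gradient (f j) (Θ k), Θ' k - Θ k⟫) := by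
    simp only [blockGradient, fun k => (hasGradientAt_clusterObjective_update hw Θ k fun j => hf j _).gradient,
      inner_neg_left, real_inner_smul_left, sum_inner]
    rw [sum_neg_distrib, ← mul_sum, sum_comm]
  have hquad : (1 / (N : ℝ)) * ∑ j, ∑ k, P j k * ‖Θ' k - Θ k‖ ^ 2 ≤ ∑ k, ‖Θ' k - Θ k‖ ^ 2 :=
    calc (1 / (N : ℝ)) * ∑ j, ∑ k, P j k * ‖Θ' k - Θ k‖ ^ 2
        ≤ (1 / (N : ℝ)) * ∑ _j : Fin N, ∑ k, ‖Θ' k - Θ k‖ ^ 2 := by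
          gcongr with j _ k _
          exact mul_le_of_le_one_left (sq_nonneg _) (responsibility_le_one (hw j) _ k)
      _ = (N / N : ℝ) * ∑ k, ‖Θ' k - Θ k‖ ^ 2 := by
          simp only [one_div, sum_const, card_univ, Fintype.card_fin, nsmul_eq_mul]; ring
      _ ≤ ∑ k, ‖Θ' k - Θ k‖ ^ 2 := mul_le_of_le_one_left (by positivity) (div_self_le_one _)
  have hdescent : ∀ j k, -⟪gradient (f j) (Θ k), Θ' k - Θ k⟫ - L / 2 * ‖Θ' k - Θ k‖ ^ 2
      ≤ f j (Θ k) - f j (Θ' k) := fun j k => by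
    have := le_add_inner_gradient_add_sq (hf j) (hsmooth j) (Θ k) (Θ' k - Θ k)
    rw [add_sub_cancel] at this
    linarith
  have hjensen : (1 / (N : ℝ)) * ∑ j, ∑ k, P j k * (f j (Θ k) - f j (Θ' k))
      ≤ clusterObjective f w Θ' - clusterObjective f w Θ := by
    rw [clusterObjective, clusterObjective, ← mul_sub, ← sum_sub_distrib]
    gcongr with j
    exact sum_responsibility_mul_sub_le_logMix_sub (hw j) _ _
  calc clusterObjective f w Θ
        + ∑ k, ⟪blockGradient (clusterObjective f w) Θ k, Θ' k - Θ k⟫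
        - L / 2 * ∑ k, ‖Θ' k - Θ k‖ ^ 2
      ≤ clusterObjective f w Θ + (1 / (N : ℝ)) * ∑ j, ∑ k,
          P j k * (-⟪gradient (f j) (Θ k), Θ' k - Θ k⟫ - L / 2 * ‖Θ' k - Θ k‖ ^ 2) := by
        simp only [mul_sub, mul_neg, sum_sub_distrib, sum_neg_distrib]
        simp only [mul_left_comm _ (L / 2), ← mul_sum]
        linarith [mul_le_mul_of_nonneg_left hquad (by positivity : 0 ≤ L / 2)]
    _ ≤ clusterObjective f w Θ + (1 / (N : ℝ)) * ∑ j, ∑ k, P j k * (f j (Θ k) - f j (Θ' k)) := by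
        gcongr _ + _ * ∑ j, ∑ k, ?_ with j _ k _
        exact mul_le_mul_of_nonneg_left (hdescent j k) (hP0 j k)
    _ ≤ clusterObjective f w Θ' := by linarith

theorem sum_mul_norm_sq_le_clusterObjective_gradient_step [Nonempty ι] (hw : ∀ j k, 0 < w j k)
    (hf : ∀ j, Differentiable ℝ (f j)) {L : ℝ} (hL : 0 ≤ L)
    (hsmooth : ∀ j a b, ‖gradient (f j) a - gradient (f j) b‖ ≤ L * ‖a - b‖) (Θ : ι → E)
    (η : ℝ) :
    ∑ k, (η - L / 2 * η ^ 2) *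
        ‖blockGradient (clusterObjective f w) Θ k‖ ^ 2
      ≤ clusterObjective f w
          (fun k => Θ k + η • blockGradient (clusterObjective f w) Θ k)
        - clusterObjective f w Θ := by
  have := clusterObjective_add_sum_inner_sub_le hw hf hL hsmooth Θ
    (fun k => Θ k + η • blockGradient (clusterObjective f w) Θ k)
  simp only [add_sub_cancel_left, real_inner_smul_right, real_inner_self_eq_norm_sq, norm_smul,
    mul_pow, Real.norm_eq_abs, sq_abs, mul_sum] at this
  simp only [sub_mul, mul_assoc, sum_sub_distrib] at this ⊢
  linarith

end Objective

theorem stmt_9_general {E : Type*} [NormedAddCommGroup E] [InnerProductSpace ℝ E] [CompleteSpace E]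
    (N K : ℕ) (hN : 1 ≤ N)
    (f : Fin N → E → ℝ) (hf : ∀ j, Differentiable ℝ (f j)) (L : ℝ)
    (hsmooth : ∀ (j : Fin N) (a b : E),
      ‖gradient (f j) a - gradient (f j) b‖ ≤ L * ‖a - b‖)
    (σ : ℝ)
    (w : Fin N → Fin K → ℝ) (hw : ∀ j k, 0 < w j k)
    (F : (Fin K → E) → ℝ)
    (hF : ∀ Θ : Fin K → E,
      F Θ = (1 / (N : ℝ)) * ∑ j, Real.log (∑ k, w j k * Real.exp (-(f j (Θ k)))))
    (η : ℝ) (hη : 0 < η) (Θ Θ' : Fin K → E)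
    (hΘ' : ∀ k, Θ' k = Θ k + η • gradient (fun θ => F (Function.update Θ k θ)) (Θ k)) :
    F Θ' - F Θ ≥
      ∑ k, (η - (5 * L / 2) * η ^ 2 - (9 * σ ^ 2 / 16) * η ^ 2 - (3 * L * σ ^ 2 / 16) * η ^ 3) *
        ‖gradient (fun θ => F (Function.update Θ k θ)) (Θ k)‖ ^ 2 := by
  obtain rfl : F = clusterObjective f w := funext hF
  obtain rfl := funext hΘ'
  obtain hzero | ⟨k₀, hk₀⟩ := forall_or_exists_not fun k =>
    gradient (fun θ => clusterObjective f w (Function.update Θ k θ)) (Θ k) = 0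
  · simp [hzero]
  have : Nonempty (Fin K) := ⟨k₀⟩
  have : Nontrivial E := ⟨⟨_, 0, hk₀⟩⟩
  have hL : 0 ≤ L := nonneg_of_norm_sub_le_mul_norm (hsmooth ⟨0, hN⟩)
  refine le_trans (sum_le_sum fun k _ => mul_le_mul_of_nonneg_right ?_ (sq_nonneg _))
    (sum_mul_norm_sq_le_clusterObjective_gradient_step hw hf hL hsmooth Θ η)
  nlinarith [mul_nonneg hL (sq_nonneg η), mul_nonneg (sq_nonneg σ) (sq_nonneg η),
    mul_nonneg (mul_nonneg hL (sq_nonneg σ)) (pow_pos hη 3).le]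

theorem stmt_9 {E : Type*} [NormedAddCommGroup E] [InnerProductSpace ℝ E] [CompleteSpace E]
    (N K : ℕ) (hN : 1 ≤ N) (hK : 1 ≤ K)
    (f : Fin N → E → ℝ) (hf : ∀ j, Differentiable ℝ (f j)) (L : ℝ)
    (hsmooth : ∀ (j : Fin N) (a b : E),
      ‖gradient (f j) a - gradient (f j) b‖ ≤ L * ‖a - b‖)
    (σ : ℝ)
    (hbound : ∀ θ : E, (1 / (N : ℝ)) * ∑ j, ‖gradient (f j) θ‖ ^ 2 ≤ σ ^ 2)
    (w : Fin N → Fin K → ℝ) (hw : ∀ j k, 0 < w j k)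
    (F : (Fin K → E) → ℝ)
    (hF : ∀ Θ : Fin K → E,
      F Θ = (1 / (N : ℝ)) * ∑ j, Real.log (∑ k, w j k * Real.exp (-(f j (Θ k)))))
    (η : ℝ) (hη : 0 < η) (Θ Θ' : Fin K → E)
    (hΘ' : ∀ k, Θ' k = Θ k + η • gradient (fun θ => F (Function.update Θ k θ)) (Θ k)) :
    F Θ' - F Θ ≥
      ∑ k, (η - (5 * L / 2) * η ^ 2 - (9 * σ ^ 2 / 16) * η ^ 2 - (3 * L * σ ^ 2 / 16) * η ^ 3) *
        ‖gradient (fun θ => F (Function.update Θ k θ)) (Θ k)‖ ^ 2 :=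
  stmt_9_general N K hN f hf L hsmooth σ w hw F hF η hη Θ Θ' hΘ'
end
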